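/- The Hausdorff dimension of the Cantor set C equals log 3 / log(φ³). -/

import Mathlib

open Set

noncomputable section

/-- The golden ratio `(1+√5)/2`. -/
def gold : ℝ := (1 + Real.sqrt 5) / 2

/-- The Cantor set `C`: sums `Σ a_k φ^(-3k)` with digits `a_k ∈ {0, 4-2φ, 2φ-2}`. -/
def cantorC : Set ℝ :=
  {x | ∃ a : ℕ → ℝ, (∀ k, a k = 0 ∨ a k = 4 - 2 * gold ∨ a k = 2 * gold - 2) ∧
    x = ∑' k : ℕ, a k * (gold ^ (3 * k))⁻¹}

/-- The endpoints of the connected components of `ℝ ∖ C`. -/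
def cantorEndpoints : Set ℝ :=
  {x | ∃ y : ℝ, y ∉ cantorC ∧ x ∈ closure (connectedComponentIn cantorCᶜ y)}

/-- `C♯`: the Cantor set minus the endpoints of complementary components. -/
def cantorCsharp : Set ℝ := cantorC \ cantorEndpoints

/-!
The Cantor set is the image of the coding map `a ↦ ∑ d (a k) * r ^ k` on sequences of three
digits, with `r = φ⁻³`. Covering it by the `3 ^ n` images of the length-`n` cylinders, each of
diameter `O(r ^ n)`, shows that its `log 3 / log φ³`-dimensional Hausdorff measure is finite.
Conversely, distinct digits differ by at least `4φ - 6`, more than the largest possible tail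
`r (2φ - 2) / (1 - r) = 2 - φ`, so two codes first differing at index `n` have images at distance
`≥ (5φ - 8) rⁿ`. Hence reading a code as a base-3 expansion is a Hölder map of exponent
`log 3 / log φ³` from the Cantor set onto `[0, 1]`, which gives the lower bound.
-/

open Filter Topology MeasureTheory NNReal ENNReal

def codingMap {ι : Type*} (d : ι → ℝ) (r : ℝ) (a : ℕ → ι) : ℝ := ∑' k, d (a k) * r ^ k

section CodingMap

variable {ι : Type*} {d : ι → ℝ} {r D δ : ℝ}

theorem summable_codingMap_term [Finite ι] (hr₀ : 0 ≤ r) (hr₁ : r < 1) (a : ℕ → ι) :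
    Summable fun k => d (a k) * r ^ k := by
  obtain ⟨M, hM⟩ := (Set.finite_range fun i => |d i|).bddAbove
  refine Summable.of_norm_bounded ((summable_geometric_of_lt_one hr₀ hr₁).mul_left M) fun k => ?_
  rw [Real.norm_eq_abs, abs_mul, abs_of_nonneg (pow_nonneg hr₀ k)]
  exact mul_le_mul_of_nonneg_right (hM ⟨a k, rfl⟩) (pow_nonneg hr₀ k)

theorem codingMap_eq_sum_add [Finite ι] (hr₀ : 0 ≤ r) (hr₁ : r < 1) (a : ℕ → ι) (n : ℕ) :
    codingMap d r a =
      ∑ k ∈ Finset.range n, d (a k) * r ^ k + r ^ n * codingMap d r (fun k => a (k + n)) := by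
  rw [codingMap, codingMap, ← (summable_codingMap_term hr₀ hr₁ a).sum_add_tsum_nat_add n,
    ← _root_.tsum_mul_left]
  congr 1
  exact tsum_congr fun k => by rw [pow_add]; ring

theorem codingMap_sub_eq_of_eqOn [Finite ι] (hr₀ : 0 ≤ r) (hr₁ : r < 1) {a b : ℕ → ι} {n : ℕ}
    (h : ∀ k < n, a k = b k) :
    codingMap d r a - codingMap d r b =
      r ^ n * (codingMap d r (fun k => a (k + n)) - codingMap d r (fun k => b (k + n))) := by
  rw [codingMap_eq_sum_add hr₀ hr₁ a n, codingMap_eq_sum_add hr₀ hr₁ b n,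
    Finset.sum_congr rfl fun k hk => by rw [h k (Finset.mem_range.1 hk)]]
  ring

theorem abs_codingMap_sub_le_of_diam [Finite ι] (hr₀ : 0 ≤ r) (hr₁ : r < 1)
    (hD : ∀ i j, |d i - d j| ≤ D) (a b : ℕ → ι) :
    |codingMap d r a - codingMap d r b| ≤ D / (1 - r) := by
  rw [codingMap, codingMap, ← (summable_codingMap_term hr₀ hr₁ a).tsum_sub
    (summable_codingMap_term hr₀ hr₁ b), div_eq_mul_inv, ← Real.norm_eq_abs]
  refine tsum_of_norm_bounded ((hasSum_geometric_of_lt_one hr₀ hr₁).mul_left D) fun k => ?_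
  rw [← sub_mul, Real.norm_eq_abs, abs_mul, abs_of_nonneg (pow_nonneg hr₀ k)]
  exact mul_le_mul_of_nonneg_right (hD _ _) (pow_nonneg hr₀ k)

theorem abs_codingMap_sub_le [Finite ι] (hr₀ : 0 ≤ r) (hr₁ : r < 1)
    (hD : ∀ i j, |d i - d j| ≤ D) {a b : ℕ → ι} {n : ℕ} (h : ∀ k < n, a k = b k) :
    |codingMap d r a - codingMap d r b| ≤ D / (1 - r) * r ^ n := by
  rw [codingMap_sub_eq_of_eqOn hr₀ hr₁ h, abs_mul, abs_of_nonneg (pow_nonneg hr₀ n), mul_comm]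
  exact mul_le_mul_of_nonneg_right (abs_codingMap_sub_le_of_diam hr₀ hr₁ hD _ _)
    (pow_nonneg hr₀ n)

theorem le_abs_codingMap_sub_of_ne_zero [Finite ι] (hr₀ : 0 ≤ r) (hr₁ : r < 1)
    (hD : ∀ i j, |d i - d j| ≤ D) (hδ : ∀ i j, i ≠ j → δ ≤ |d i - d j|) {a b : ℕ → ι}
    (h₀ : a 0 ≠ b 0) :
    δ - r * (D / (1 - r)) ≤ |codingMap d r a - codingMap d r b| := by
  set tail := codingMap d r (fun k => a (k + 1)) - codingMap d r (fun k => b (k + 1))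
  have hsplit : codingMap d r a - codingMap d r b = (d (a 0) - d (b 0)) + r * tail := by
    rw [codingMap_eq_sum_add hr₀ hr₁ a 1, codingMap_eq_sum_add hr₀ hr₁ b 1]
    simp only [Finset.range_one, Finset.sum_singleton, pow_zero, pow_one, mul_one, tail]
    ring
  have htail : |r * tail| ≤ r * (D / (1 - r)) := by
    rw [abs_mul, abs_of_nonneg hr₀]
    exact mul_le_mul_of_nonneg_left (abs_codingMap_sub_le_of_diam hr₀ hr₁ hD _ _) hr₀
  rw [hsplit]
  linarith [hδ _ _ h₀, abs_sub_abs_le_abs_add (d (a 0) - d (b 0)) (r * tail)]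

theorem le_abs_codingMap_sub [Finite ι] (hr₀ : 0 ≤ r) (hr₁ : r < 1)
    (hD : ∀ i j, |d i - d j| ≤ D) (hδ : ∀ i j, i ≠ j → δ ≤ |d i - d j|) {a b : ℕ → ι} {n : ℕ}
    (hn : a n ≠ b n) (h : ∀ k < n, a k = b k) :
    (δ - r * (D / (1 - r))) * r ^ n ≤ |codingMap d r a - codingMap d r b| := by
  rw [codingMap_sub_eq_of_eqOn hr₀ hr₁ h, abs_mul, abs_of_nonneg (pow_nonneg hr₀ n), mul_comm]
  exact mul_le_mul_of_nonneg_left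
    (le_abs_codingMap_sub_of_ne_zero hr₀ hr₁ hD hδ (by simpa using hn)) (pow_nonneg hr₀ n)

end CodingMap

def similarityDim (m : ℕ) (r : ℝ) : ℝ := Real.log m / Real.log r⁻¹

section SimilarityDim

variable {m : ℕ} {r : ℝ}

theorem similarityDim_nonneg (hr₀ : 0 < r) (hr₁ : r < 1) : 0 ≤ similarityDim m r :=
  div_nonneg (Real.log_natCast_nonneg m) (Real.log_nonneg (one_le_inv₀ hr₀ |>.2 hr₁.le))

theorem similarityDim_pos (hm : 1 < m) (hr₀ : 0 < r) (hr₁ : r < 1) : 0 < similarityDim m r :=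
  div_pos (Real.log_pos (by exact_mod_cast hm)) (Real.log_pos (one_lt_inv₀ hr₀ |>.2 hr₁))

theorem pow_rpow_similarityDim (hm : 0 < m) (hr₀ : 0 < r) (hr₁ : r < 1) (n : ℕ) :
    (r ^ n) ^ similarityDim m r = ((m : ℝ) ^ n)⁻¹ := by
  have hlog : Real.log r ≠ 0 := (Real.log_neg hr₀ hr₁).ne
  have hr : r ^ similarityDim m r = (m : ℝ)⁻¹ := by
    rw [Real.rpow_def_of_pos hr₀, similarityDim, Real.log_inv, mul_div, mul_comm, ← mul_div,
      div_neg, div_self hlog, mul_neg_one, Real.exp_neg, Real.exp_log (by exact_mod_cast hm)]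
  rw [← Real.rpow_natCast, ← Real.rpow_mul hr₀.le, mul_comm, Real.rpow_mul hr₀.le, hr,
    Real.rpow_natCast, inv_pow]

end SimilarityDim

section Dimension

variable {ι : Type*} {d : ι → ℝ} {r D δ : ℝ}

theorem ediam_codingMap_image_cylinder_le [Finite ι] (hr₀ : 0 ≤ r) (hr₁ : r < 1)
    (hD : ∀ i j, |d i - d j| ≤ D) {n : ℕ} (w : Fin n → ι) :
    Metric.ediam (codingMap d r '' {a | ∀ k : Fin n, a k = w k}) ≤
      ENNReal.ofReal (D / (1 - r) * r ^ n) := by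
  refine Metric.ediam_le ?_
  rintro _ ⟨a, ha, rfl⟩ _ ⟨b, hb, rfl⟩
  rw [edist_dist, Real.dist_eq]
  exact ENNReal.ofReal_le_ofReal <| abs_codingMap_sub_le hr₀ hr₁ hD fun k hk => by
    rw [ha ⟨k, hk⟩, hb ⟨k, hk⟩]

theorem hausdorffMeasure_range_codingMap_ne_top [Fintype ι] [Nonempty ι] (hr₀ : 0 < r)
    (hr₁ : r < 1) (hD : ∀ i j, |d i - d j| ≤ D) :
    μH[similarityDim (Fintype.card ι) r] (range (codingMap d r)) ≠ ∞ := by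
  classical
  set s := similarityDim (Fintype.card ι) r
  set K := D / (1 - r)
  have hs : 0 ≤ s := similarityDim_nonneg hr₀ hr₁
  have hK : 0 ≤ K := by
    obtain ⟨i⟩ := ‹Nonempty ι›
    exact div_nonneg (by simpa using hD i i) (sub_nonneg.2 hr₁.le)
  set t : ∀ n : ℕ, (Fin n → ι) → Set ℝ := fun n w => codingMap d r '' {a | ∀ k : Fin n, a k = w k}
  have hdiam (n : ℕ) (w : Fin n → ι) : Metric.ediam (t n w) ≤ ENNReal.ofReal (K * r ^ n) :=
    ediam_codingMap_image_cylinder_le hr₀.le hr₁ hD w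
  have hlim : Tendsto (fun n : ℕ => ENNReal.ofReal (K * r ^ n)) atTop (𝓝 0) := by
    simpa using ENNReal.tendsto_ofReal
      ((tendsto_pow_atTop_nhds_zero_of_lt_one hr₀.le hr₁).const_mul K)
  have hcover (n : ℕ) : range (codingMap d r) ⊆ ⋃ w : Fin n → ι, t n w := by
    rintro _ ⟨a, rfl⟩
    exact mem_iUnion.2 ⟨fun k => a k, a, fun _ => rfl, rfl⟩
  have hsum (n : ℕ) : ∑ w : Fin n → ι, Metric.ediam (t n w) ^ s ≤ ENNReal.ofReal (K ^ s) :=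
    calc ∑ w : Fin n → ι, Metric.ediam (t n w) ^ s
        ≤ ∑ _w : Fin n → ι, ENNReal.ofReal ((K * r ^ n) ^ s) := by
          gcongr with w
          rw [← ENNReal.ofReal_rpow_of_nonneg (by positivity) hs]
          exact ENNReal.rpow_le_rpow (hdiam n w) hs
      _ = ENNReal.ofReal (Fintype.card ι ^ n * (K * r ^ n) ^ s) := by
          rw [Finset.sum_const, Finset.card_univ, Fintype.card_fun, Fintype.card_fin, nsmul_eq_mul,
            ENNReal.ofReal_mul (by positivity)]
          norm_cast
      _ = ENNReal.ofReal (K ^ s) := by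
          rw [Real.mul_rpow hK (pow_nonneg hr₀.le n),
            pow_rpow_similarityDim Fintype.card_pos hr₀ hr₁, mul_left_comm,
            mul_inv_cancel₀ (by positivity), mul_one]
  refine ne_top_of_le_ne_top (ENNReal.ofReal_ne_top (r := K ^ s)) ?_
  calc μH[s] (range (codingMap d r))
      ≤ liminf (fun n => ∑ w : Fin n → ι, Metric.ediam (t n w) ^ s) atTop :=
        Measure.hausdorffMeasure_le_liminf_sum s _ _ hlim t (.of_forall hdiam) (.of_forall hcover)
    _ ≤ ENNReal.ofReal (K ^ s) := by
        simpa using liminf_le_liminf (f := atTop) (.of_forall hsum)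

theorem codingMap_injective [Finite ι] (hr₀ : 0 < r) (hr₁ : r < 1)
    (hD : ∀ i j, |d i - d j| ≤ D) (hδ : ∀ i j, i ≠ j → δ ≤ |d i - d j|)
    (hgap : r * (D / (1 - r)) < δ) : Function.Injective (codingMap d r) := by
  intro a b hab
  by_contra hne
  have := le_abs_codingMap_sub hr₀.le hr₁ hD hδ (PiNat.apply_firstDiff_ne hne)
    fun _ => PiNat.apply_eq_of_lt_firstDiff
  rw [hab, sub_self, abs_zero] at this
  exact this.not_gt (mul_pos (sub_pos.2 hgap) (pow_pos hr₀ _))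

theorem abs_ofDigits_sub_le {m : ℕ} {d : Fin m → ℝ} (hr₀ : 0 < r) (hr₁ : r < 1)
    (hD : ∀ i j, |d i - d j| ≤ D) (hδ : ∀ i j, i ≠ j → δ ≤ |d i - d j|)
    (hgap : r * (D / (1 - r)) < δ) (a b : ℕ → Fin m) :
    |Real.ofDigits a - Real.ofDigits b| ≤ (δ - r * (D / (1 - r))) ^ (-similarityDim m r) *
      |codingMap d r a - codingMap d r b| ^ similarityDim m r := by
  set s := similarityDim m r
  set g := δ - r * (D / (1 - r))
  have hg : 0 < g := sub_pos.2 hgap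
  rcases eq_or_ne a b with rfl | hne
  · simp only [sub_self, abs_zero]
    positivity
  set n := PiNat.firstDiff a b
  have hagree : ∀ k < n, a k = b k := fun _ => PiNat.apply_eq_of_lt_firstDiff
  have hsep := le_abs_codingMap_sub hr₀.le hr₁ hD hδ (PiNat.apply_firstDiff_ne hne) hagree
  calc |Real.ofDigits a - Real.ofDigits b| ≤ ((m : ℝ) ^ n)⁻¹ :=
        Real.abs_ofDigits_sub_ofDigits_le hagree
    _ = (r ^ n) ^ s := (pow_rpow_similarityDim (Fin.pos (a 0)) hr₀ hr₁ n).symm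
    _ ≤ (|codingMap d r a - codingMap d r b| / g) ^ s :=
        Real.rpow_le_rpow (by positivity) ((le_div_iff₀' hg).2 hsep)
          (similarityDim_nonneg hr₀ hr₁)
    _ = g ^ (-s) * |codingMap d r a - codingMap d r b| ^ s := by
        rw [Real.div_rpow (abs_nonneg _) hg.le, Real.rpow_neg hg.le, div_eq_inv_mul]

theorem holderOnWith_ofDigits_invFun_codingMap {m : ℕ} [NeZero m] {d : Fin m → ℝ} (hr₀ : 0 < r)
    (hr₁ : r < 1) (hD : ∀ i j, |d i - d j| ≤ D) (hδ : ∀ i j, i ≠ j → δ ≤ |d i - d j|)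
    (hgap : r * (D / (1 - r)) < δ) :
    HolderOnWith ((δ - r * (D / (1 - r))) ^ (-similarityDim m r)).toNNReal
      (similarityDim m r).toNNReal (fun x => Real.ofDigits (Function.invFun (codingMap d r) x))
      (range (codingMap d r)) := by
  have hs := similarityDim_nonneg (m := m) hr₀ hr₁
  rintro _ ⟨a, rfl⟩ _ ⟨b, rfl⟩
  simp only [Function.leftInverse_invFun (codingMap_injective hr₀ hr₁ hD hδ hgap) _]
  rw [edist_dist, edist_dist, Real.dist_eq, Real.dist_eq, Real.coe_toNNReal _ hs,
    ENNReal.ofReal_rpow_of_nonneg (abs_nonneg _) hs, ENNReal.ofNNReal_toNNReal,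
    ← ENNReal.ofReal_mul (Real.rpow_nonneg (sub_pos.2 hgap).le _)]
  exact ENNReal.ofReal_le_ofReal (abs_ofDigits_sub_le hr₀ hr₁ hD hδ hgap a b)

theorem similarityDim_le_dimH_range_codingMap {m : ℕ} {d : Fin m → ℝ} (hm : 1 < m)
    (hr₀ : 0 < r) (hr₁ : r < 1) (hD : ∀ i j, |d i - d j| ≤ D)
    (hδ : ∀ i j, i ≠ j → δ ≤ |d i - d j|) (hgap : r * (D / (1 - r)) < δ) :
    ENNReal.ofReal (similarityDim m r) ≤ dimH (range (codingMap d r)) := by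
  have : NeZero m := ⟨by omega⟩
  set f : ℝ → ℝ := fun x => Real.ofDigits (Function.invFun (codingMap d r) x)
  have hs : 0 < (similarityDim m r).toNNReal := Real.toNNReal_pos.2 (similarityDim_pos hm hr₀ hr₁)
  have hsurj : Icc 0 1 ⊆ f '' range (codingMap d r) := by
    intro y hy
    obtain ⟨a, -, rfl⟩ := Real.ofDigits_SurjOn hm hy
    refine ⟨codingMap d r a, mem_range_self a, ?_⟩
    simp only [f, Function.leftInverse_invFun (codingMap_injective hr₀ hr₁ hD hδ hgap) a]
  have := (dimH_mono hsurj).trans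
    ((holderOnWith_ofDigits_invFun_codingMap hr₀ hr₁ hD hδ hgap).dimH_image_le hs)
  rwa [Real.dimH_of_nonempty_interior (by simp), Module.finrank_self, Nat.cast_one,
    ENNReal.le_div_iff_mul_le (.inl (by simpa using hs.ne')) (.inl ENNReal.coe_ne_top),
    one_mul] at this

theorem dimH_range_codingMap {m : ℕ} {d : Fin m → ℝ} (hm : 1 < m) (hr₀ : 0 < r) (hr₁ : r < 1)
    (hD : ∀ i j, |d i - d j| ≤ D) (hδ : ∀ i j, i ≠ j → δ ≤ |d i - d j|)
    (hgap : r * (D / (1 - r)) < δ) :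
    dimH (range (codingMap d r)) = ENNReal.ofReal (similarityDim m r) := by
  have : Nonempty (Fin m) := ⟨⟨0, by omega⟩⟩
  have hfin := hausdorffMeasure_range_codingMap_ne_top (d := d) hr₀ hr₁ hD
  rw [Fintype.card_fin, ← Real.coe_toNNReal _ (similarityDim_nonneg hr₀ hr₁)] at hfin
  exact (dimH_le_of_hausdorffMeasure_ne_top hfin).antisymm
    (similarityDim_le_dimH_range_codingMap hm hr₀ hr₁ hD hδ hgap)

end Dimension

def goldDigit : Fin 3 → ℝ := ![0, 4 - 2 * gold, 2 * gold - 2]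

theorem gold_sq : gold ^ 2 = gold + 1 := Real.goldenRatio_sq

theorem gold_cube : gold ^ 3 = 2 * gold + 1 := by
  linear_combination (gold + 1) * gold_sq

theorem gold_bounds : 8 / 5 < gold ∧ gold < 5 / 3 := by
  have h5 := Real.sq_sqrt (show (0 : ℝ) ≤ 5 by norm_num)
  have h0 := Real.sqrt_nonneg 5
  constructor <;> rw [gold] <;> nlinarith

theorem abs_goldDigit_sub_le (i j : Fin 3) : |goldDigit i - goldDigit j| ≤ 2 * gold - 2 := by
  obtain ⟨h₁, h₂⟩ := gold_bounds
  rw [abs_le]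
  constructor <;> fin_cases i <;> fin_cases j <;> simp [goldDigit] <;> linarith

theorem le_abs_goldDigit_sub {i j : Fin 3} (h : i ≠ j) :
    4 * gold - 6 ≤ |goldDigit i - goldDigit j| := by
  obtain ⟨h₁, h₂⟩ := gold_bounds
  rw [le_abs]
  fin_cases i <;> fin_cases j <;> simp_all [goldDigit] <;>
    first | (left; linarith) | (right; linarith)

theorem goldDigit_tail_lt_gap :
    (gold ^ 3)⁻¹ * ((2 * gold - 2) / (1 - (gold ^ 3)⁻¹)) < 4 * gold - 6 := by
  obtain ⟨h₁, h₂⟩ := gold_bounds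
  have hg : gold ≠ 0 := by linarith
  have : (gold ^ 3)⁻¹ * ((2 * gold - 2) / (1 - (gold ^ 3)⁻¹)) = 2 - gold := by
    rw [gold_cube]
    field_simp
    linear_combination 2 * gold_sq
  linarith

theorem cantorC_eq_range_codingMap : cantorC = range (codingMap goldDigit (gold ^ 3)⁻¹) := by
  have hdigit (x : ℝ) : (x = 0 ∨ x = 4 - 2 * gold ∨ x = 2 * gold - 2) ↔ x ∈ range goldDigit := by
    simp [goldDigit]
    tauto
  ext x
  simp only [cantorC, hdigit, mem_range, codingMap, ← inv_pow, ← pow_mul]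
  constructor
  · rintro ⟨a, ha, rfl⟩
    choose e he using ha
    exact ⟨e, by simp only [he]⟩
  · rintro ⟨e, rfl⟩
    exact ⟨fun k => goldDigit (e k), fun k => ⟨e k, rfl⟩, rfl⟩

/-- The Hausdorff dimension of the Cantor set `C` is `log 3 / log φ³`. -/
theorem cantorC_dimH :
    dimH cantorC = ENNReal.ofReal (Real.log 3 / Real.log (gold ^ 3)) := by
  obtain ⟨h₁, h₂⟩ := gold_bounds
  have hr₀ : 0 < (gold ^ 3)⁻¹ := by positivity
  have hr₁ : (gold ^ 3)⁻¹ < 1 := inv_lt_one_of_one_lt₀ (by rw [gold_cube]; linarith)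
  rw [cantorC_eq_range_codingMap, dimH_range_codingMap (by norm_num) hr₀ hr₁
    abs_goldDigit_sub_le (fun _ _ => le_abs_goldDigit_sub) goldDigit_tail_lt_gap,
    similarityDim, inv_inv, Nat.cast_ofNat]
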